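/- arXiv:1805.04071 — 2 statements merged into one kernel-verified Lean document; each statement's English description precedes it below -/
import Mathlib

section
/- Let u and v be distinct vertices of V_H, let S ∈ C(u,v) be a type-2 component, and let l be a positive integer. If the distance between u and v in the subgraph of G induced by V ∖ S equals l, then φ^l(S) equals the maximum of dist_G(s,t) over all pairs of vertices s, t ∈ S ∪ {u,v}. -/
open SimpleGraph Set

namespace EnergyDiameter

noncomputable section

variable {V : Type*}

/-- The subgraph of `G` induced by the vertex set `A`, viewed as a graph on the same
vertex type (vertices outside `A` become isolated). -/
def restrictG (G : SimpleGraph V) (A : Set V) : SimpleGraph V where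
  Adj x y := G.Adj x y ∧ x ∈ A ∧ y ∈ A
  symm := ⟨by rintro x y ⟨h, hx, hy⟩; exact ⟨h.symm, hy, hx⟩⟩
  loopless := ⟨fun x h => G.irrefl h.1⟩

/-- `G[S]`: the subgraph of `G` induced by all edges of `G` having at least one endpoint
in `S`, viewed as a graph on the same vertex type. -/
def edgeNbhdG (G : SimpleGraph V) (S : Set V) : SimpleGraph V where
  Adj x y := G.Adj x y ∧ (x ∈ S ∨ y ∈ S)
  symm := ⟨by rintro x y ⟨h, hxy⟩; exact ⟨h.symm, hxy.symm⟩⟩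
  loopless := ⟨fun x h => G.irrefl h.1⟩

/-- The vertex set of `G[S]`: `S` together with all `G`-neighbors of vertices of `S`. -/
def vertsOf (G : SimpleGraph V) (S : Set V) : Set V :=
  S ∪ {x | ∃ w ∈ S, G.Adj x w}

/-- One direction of the edges of `H` together with a new internally disjoint path
of length `l` between `u` and `v` (with internal vertices `Fin (l-1)`). -/
def addPathRel (H : SimpleGraph V) (u v : V) (l : ℕ) :
    V ⊕ Fin (l - 1) → V ⊕ Fin (l - 1) → Prop
  | Sum.inl a, Sum.inl b => H.Adj a b ∨ (l = 1 ∧ a = u ∧ b = v)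
  | Sum.inl a, Sum.inr i => (a = u ∧ (i : ℕ) = 0) ∨ (a = v ∧ (i : ℕ) + 2 = l)
  | Sum.inr i, Sum.inr j => (i : ℕ) + 1 = (j : ℕ)
  | _, _ => False

/-- `G^l[S]`-style construction: `H` with a new internally disjoint path of length `l`
added between `u` and `v`. -/
def addPathG (H : SimpleGraph V) (u v : V) (l : ℕ) : SimpleGraph (V ⊕ Fin (l - 1)) :=
  SimpleGraph.fromRel (addPathRel H u v l)

/-- `max_{s,t ∈ A} dist_H(s,t)`. -/
def maxDistOn {W : Type*} (H : SimpleGraph W) (A : Set W) : ℕ :=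
  sSup {d : ℕ | ∃ s ∈ A, ∃ t ∈ A, d = H.dist s t}

variable [Fintype V]

/-- `√n` where `n` is the number of vertices. -/
def sqrtn (V : Type*) [Fintype V] : ℝ := Real.sqrt (Fintype.card V)

/-- The high-degree vertices: degree at least `√n`. -/
def VH (G : SimpleGraph V) : Set V := {v | sqrtn V ≤ ((G.neighborSet v).ncard : ℝ)}

/-- The low-degree vertices. -/
def VL (G : SimpleGraph V) : Set V := (VH G)ᶜ

/-- `S` is a connected component of the subgraph of `G` induced by `V_L`. -/
def IsLowComp (G : SimpleGraph V) (S : Set V) : Prop :=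
  S ⊆ VL G ∧ ∃ x ∈ S, ∀ y : V, ((restrictG G (VL G)).Reachable x y ↔ y ∈ S)

/-- The set of high-degree vertices having a `G`-neighbor in `S`. -/
def HNbrs (G : SimpleGraph V) (S : Set V) : Set V :=
  {x | x ∈ VH G ∧ ∃ w ∈ S, G.Adj x w}

/-- `|S| ≤ √n`. -/
def SmallComp (S : Set V) : Prop := (S.ncard : ℝ) ≤ sqrtn V

def IsType1 (G : SimpleGraph V) (S : Set V) : Prop :=
  IsLowComp G S ∧ SmallComp S ∧ ∃ u : V, HNbrs G S = {u}

def IsType2 (G : SimpleGraph V) (S : Set V) : Prop :=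
  IsLowComp G S ∧ SmallComp S ∧ ∃ u v : V, u ≠ v ∧ HNbrs G S = {u, v}

def IsType3 (G : SimpleGraph V) (S : Set V) : Prop :=
  IsLowComp G S ∧ ¬ IsType1 G S ∧ ¬ IsType2 G S

/-- `C(u)`: type-1 components attached to `u`. -/
def C1 (G : SimpleGraph V) (u : V) : Set (Set V) :=
  {S | IsLowComp G S ∧ SmallComp S ∧ HNbrs G S = {u}}

/-- `C(u,v)`: type-2 components attached to `{u,v}`. -/
def C2 (G : SimpleGraph V) (u v : V) : Set (Set V) :=
  {S | IsLowComp G S ∧ SmallComp S ∧ HNbrs G S = {u, v}}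

/-- `max_{w ∈ S} dist_G(u,w)`. -/
def eccOn (G : SimpleGraph V) (u : V) (S : Set V) : ℕ := sSup (G.dist u '' S)

/-- `S^{u,k}`: vertices of `S` whose `G[S]`-distance to `v` exceeds that to `u`
by at least `k`. -/
def Suk (G : SimpleGraph V) (S : Set V) (u v : V) (k : ℤ) : Set V :=
  {w | w ∈ S ∧ k ≤ ((edgeNbhdG G S).dist w v : ℤ) - ((edgeNbhdG G S).dist w u : ℤ)}

/-- `max_{w ∈ S^{u,k}} dist_{G[S]}(u,w)`. -/
def eccK (G : SimpleGraph V) (S : Set V) (u v : V) (k : ℤ) : ℕ :=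
  sSup ((edgeNbhdG G S).dist u '' Suk G S u v k)

/-- `φ^l(S) = max_{s,t ∈ S ∪ {u,v}} dist_{G^l[S]}(s,t)`. -/
def phiG (G : SimpleGraph V) (S : Set V) (u v : V) (l : ℕ) : ℕ :=
  maxDistOn (addPathG (edgeNbhdG G S) u v l) (Sum.inl '' (S ∪ {u, v}))

/-- A choice of the distance parameters of type-1 and type-2 components. -/
structure Params (V : Type*) where
  A1 : V → Set V
  A2 : V → Set V
  B : V → Set V
  R : V → V → Set V
  A1k : ℤ → V → V → Set V
  A2k : ℤ → V → V → Set V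
  Bl : ℕ → V → V → Set V

def kBound (V : Type*) [Fintype V] : ℤ := (Nat.floor (sqrtn V) : ℤ) + 1

def lBound (V : Type*) [Fintype V] : ℕ := Nat.floor (sqrtn V) + 1

/-- The defining properties of the parameters (set-valued parameters default to `∅`
when undefined; ties broken arbitrarily). -/
def ValidParams (G : SimpleGraph V) (P : Params V) : Prop :=
  (∀ u ∈ VH G,
    ((C1 G u).Nonempty → P.A1 u ∈ C1 G u ∧
        ∀ S ∈ C1 G u, eccOn G u S ≤ eccOn G u (P.A1 u)) ∧
    (¬ (C1 G u).Nonempty → P.A1 u = ∅)) ∧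
  (∀ u ∈ VH G,
    ((C1 G u \ {P.A1 u}).Nonempty → P.A2 u ∈ C1 G u \ {P.A1 u} ∧
        ∀ S ∈ C1 G u \ {P.A1 u}, eccOn G u S ≤ eccOn G u (P.A2 u)) ∧
    (¬ (C1 G u \ {P.A1 u}).Nonempty → P.A2 u = ∅)) ∧
  (∀ u ∈ VH G,
    ((C1 G u).Nonempty → P.B u ∈ C1 G u ∧
        ∀ S ∈ C1 G u, maxDistOn G (S ∪ {u}) ≤ maxDistOn G (P.B u ∪ {u})) ∧
    (¬ (C1 G u).Nonempty → P.B u = ∅)) ∧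
  (∀ u ∈ VH G, ∀ v ∈ VH G, u ≠ v →
    ((C2 G u v).Nonempty → P.R u v ∈ C2 G u v ∧
        ∀ S ∈ C2 G u v, (edgeNbhdG G (P.R u v)).dist u v ≤ (edgeNbhdG G S).dist u v) ∧
    (¬ (C2 G u v).Nonempty → P.R u v = ∅)) ∧
  (∀ u ∈ VH G, ∀ v ∈ VH G, u ≠ v → ∀ k : ℤ,
    ((C2 G u v).Nonempty → P.A1k k u v ∈ C2 G u v ∧
        ∀ S ∈ C2 G u v, eccK G S u v k ≤ eccK G (P.A1k k u v) u v k) ∧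
    (¬ (C2 G u v).Nonempty → P.A1k k u v = ∅)) ∧
  (∀ u ∈ VH G, ∀ v ∈ VH G, u ≠ v → ∀ k : ℤ,
    ((C2 G u v \ {P.A1k k u v}).Nonempty → P.A2k k u v ∈ C2 G u v \ {P.A1k k u v} ∧
        ∀ S ∈ C2 G u v \ {P.A1k k u v}, eccK G S u v k ≤ eccK G (P.A2k k u v) u v k) ∧
    (¬ (C2 G u v \ {P.A1k k u v}).Nonempty → P.A2k k u v = ∅)) ∧
  (∀ u ∈ VH G, ∀ v ∈ VH G, u ≠ v → ∀ l : ℕ, 1 ≤ l →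
    ((C2 G u v \ {P.R u v}).Nonempty → P.Bl l u v ∈ C2 G u v \ {P.R u v} ∧
        ∀ S ∈ C2 G u v \ {P.R u v}, phiG G S u v l ≤ phiG G (P.Bl l u v) u v l) ∧
    (¬ (C2 G u v \ {P.R u v}).Nonempty → P.Bl l u v = ∅))

/-- The vertex set of `G*`. -/
def VStarP (G : SimpleGraph V) (P : Params V) : Set V :=
  VH G ∪ {x | ∃ S, IsType3 G S ∧ x ∈ S} ∪
    (⋃ u ∈ VH G, P.A1 u ∪ P.A2 u ∪ P.B u) ∪
    (⋃ u ∈ VH G, ⋃ v ∈ VH G, ⋃ (_ : u ≠ v),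
      (⋃ k ∈ {k : ℤ | |k| ≤ kBound V}, P.A1k k u v ∪ P.A2k k u v) ∪
      (⋃ l ∈ Set.Icc 1 (lBound V), P.Bl l u v) ∪ P.R u v)


/-- If `f` is 1-Lipschitz along edges of `H`, it grows at most by the length along walks. -/
lemma walk_le_of_lip {W : Type*} {H : SimpleGraph W} {f : W → ℕ}
    (hf : ∀ a b, H.Adj a b → f b ≤ f a + 1) {a b : W} (p : H.Walk a b) :
    f b ≤ f a + p.length := by
  induction p with
  | nil => simp
  | cons h q ih =>
    rename_i x y z
    have h1 := hf _ _ h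
    simp only [SimpleGraph.Walk.length_cons]
    omega

lemma dist_concat' {W : Type*} {H : SimpleGraph W} {x y z : W}
    (hr : H.Reachable x y) (h : H.Adj y z) : H.dist x z ≤ H.dist x y + 1 := by
  obtain ⟨p, hp⟩ := hr.exists_walk_length_eq_dist
  calc H.dist x z ≤ (p.concat h).length := SimpleGraph.dist_le _
    _ = H.dist x y + 1 := by rw [SimpleGraph.Walk.length_concat, hp]

/-- If `S ∈ C(u,v)` and the distance between `u` and `v` in the subgraph of `G`
induced by `V ∖ S` equals `l`, then `φ^l(S) = max_{s,t ∈ S ∪ {u,v}} dist_G(s,t)`. -/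
theorem phi_eq_maxDist (G : SimpleGraph V) (hG : G.Connected)
    (hn : 1 ≤ Fintype.card V) (u v : V) (hu : u ∈ VH G) (hv : v ∈ VH G)
    (huv : u ≠ v) (S : Set V) (hS : S ∈ C2 G u v) (l : ℕ) (hl : 1 ≤ l)
    (hdist : (restrictG G Sᶜ).dist u v = l) :
    phiG G S u v l = maxDistOn G (S ∪ {u, v}) := by
  classical
  obtain ⟨hLC, hSm, hHN⟩ := hS
  obtain ⟨hSub, x0, hx0, hcomp⟩ := hLC
  set H : SimpleGraph V := edgeNbhdG G S with hHdef
  set H' : SimpleGraph (V ⊕ Fin (l - 1)) := addPathG H u v l with hH'def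
  set R : SimpleGraph V := restrictG G Sᶜ with hRdef
  have huS : u ∉ S := fun h => (hSub h) hu
  have hvS : v ∉ S := fun h => (hSub h) hv
  -- neighbors of S lie in S ∪ {u, v}
  have hnbr : ∀ a ∈ S, ∀ b, G.Adj a b → b ∈ S ∪ {u, v} := by
    intro a ha b hab
    by_cases hbH : b ∈ VH G
    · right
      have hmem : b ∈ HNbrs G S := ⟨hbH, a, ha, hab.symm⟩
      rwa [hHN] at hmem
    · left
      have hra : (restrictG G (VL G)).Reachable x0 a := (hcomp a).mpr ha
      have hadj : (restrictG G (VL G)).Adj a b := ⟨hab, hSub ha, hbH⟩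
      exact (hcomp b).mp (hra.trans hadj.reachable)
  have hstep : ∀ a ∈ S, ∀ b, (restrictG G (VL G)).Adj a b → b ∈ S := by
    intro a ha b hab
    rcases hnbr a ha b hab.1 with hb | hb
    · exact hb
    · exfalso
      simp only [Set.mem_insert_iff, Set.mem_singleton_iff] at hb
      rcases hb with rfl | rfl
      · exact hab.2.2 hu
      · exact hab.2.2 hv
  -- adjacency of H lifts to H'
  have hadjInl : ∀ {a b : V}, H.Adj a b → H'.Adj (Sum.inl a) (Sum.inl b) := by
    intro a b hab
    exact ⟨fun h => hab.ne (Sum.inl.inj h), Or.inl (Or.inl hab)⟩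
  -- connectivity of S ∪ {u,v} inside H
  have hwalkS : ∀ (a z : V), a ∈ S → ((restrictG G (VL G)).Walk a z) → H.Reachable a z := by
    intro a z ha p
    induction p with
    | nil => exact SimpleGraph.Reachable.refl _
    | cons h q ih =>
      have hy : _ ∈ S := hstep _ ha _ h
      have hxy : H.Adj _ _ := ⟨h.1, Or.inl ha⟩
      exact hxy.reachable.trans (ih hy)
  have hx0' : ∀ x ∈ S ∪ {u, v}, H.Reachable x x0 := by
    intro x hx
    rcases hx with hx | hx
    · obtain ⟨p⟩ := (hcomp x).mpr hx
      exact (hwalkS x0 x hx0 p).symm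
    · have hxH : x ∈ HNbrs G S := by rw [hHN]; exact hx
      obtain ⟨-, w, hw, hxw⟩ := hxH
      have hadj : H.Adj x w := ⟨hxw, Or.inr hw⟩
      obtain ⟨p⟩ := (hcomp w).mpr hw
      exact hadj.reachable.trans (hwalkS x0 w hx0 p).symm
  have hreachS : ∀ x ∈ S ∪ {u, v}, ∀ y ∈ S ∪ {u, v}, H.Reachable x y :=
    fun x hx y hy => (hx0' x hx).trans (hx0' y hy).symm
  have hreach' : ∀ x ∈ S ∪ {u, v}, ∀ y ∈ S ∪ {u, v},
      H'.Reachable (Sum.inl x) (Sum.inl y) := by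
    intro x hx y hy
    exact (hreachS x hx y hy).map ⟨Sum.inl, fun h => hadjInl h⟩
  have hu2 : u ∈ S ∪ {u, v} := Or.inr (Or.inl rfl)
  have hv2 : v ∈ S ∪ {u, v} := Or.inr (Or.inr rfl)
  -- facts about R and l
  have hlne : l ≠ 0 := by omega
  have hRG : R ≤ G := fun a b h => h.1
  have hRreach : R.Reachable u v := by
    apply SimpleGraph.Reachable.of_dist_ne_zero
    rw [hdist]; exact hlne
  have hGuv : G.dist u v ≤ l := by
    obtain ⟨p, hp⟩ := hRreach.exists_walk_length_eq_dist
    calc G.dist u v ≤ (p.map (SimpleGraph.Hom.ofLE hRG)).length :=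
          SimpleGraph.dist_le _
      _ = p.length := SimpleGraph.Walk.length_map _ _
      _ = l := by rw [hp, hdist]
  have hGvu : G.dist v u ≤ l := by rwa [SimpleGraph.dist_comm] at hGuv
  -- the added path gives a walk of length l in H'
  have hpath : ∃ p : H'.Walk (Sum.inl u) (Sum.inl v), p.length = l := by
    rcases Nat.lt_or_ge l 2 with h2 | h2
    · have h1 : l = 1 := by omega
      have hadj : H'.Adj (Sum.inl u) (Sum.inl v) :=
        ⟨fun h => huv (Sum.inl.inj h), Or.inl (Or.inr ⟨h1, rfl, rfl⟩)⟩
      exact ⟨SimpleGraph.Walk.cons hadj SimpleGraph.Walk.nil, by simp [h1]⟩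
    · have haux : ∀ k : ℕ, ∀ i : Fin (l - 1), (i : ℕ) + k + 2 = l →
          ∃ p : H'.Walk (Sum.inr i) (Sum.inl v), p.length = k + 1 := by
        intro k
        induction k with
        | zero =>
          intro i hi
          have hadj : H'.Adj (Sum.inr i) (Sum.inl v) :=
            ⟨Sum.inr_ne_inl, Or.inr (Or.inr ⟨rfl, by omega⟩)⟩
          exact ⟨SimpleGraph.Walk.cons hadj SimpleGraph.Walk.nil, by simp⟩
        | succ k ih =>
          intro i hi
          have hlt : (i : ℕ) + 1 < l - 1 := by omega
          obtain ⟨p, hp⟩ := ih ⟨(i : ℕ) + 1, hlt⟩ (by show (i : ℕ) + 1 + k + 2 = l; omega)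
          have hadj : H'.Adj (Sum.inr i) (Sum.inr ⟨(i : ℕ) + 1, hlt⟩) := by
            refine ⟨fun h => ?_, Or.inl rfl⟩
            have h2' := congrArg (fun x => Sum.elim (fun _ : V => (0 : ℕ)) Fin.val x) h
            simp at h2'
          exact ⟨SimpleGraph.Walk.cons hadj p, by simp [hp]⟩
      have h0lt : 0 < l - 1 := by omega
      obtain ⟨p, hp⟩ := haux (l - 2) ⟨0, h0lt⟩ (by show 0 + (l - 2) + 2 = l; omega)
      have hadj : H'.Adj (Sum.inl u) (Sum.inr ⟨0, h0lt⟩) :=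
        ⟨Sum.inl_ne_inr, Or.inl (Or.inl ⟨rfl, rfl⟩)⟩
      exact ⟨SimpleGraph.Walk.cons hadj p, by rw [SimpleGraph.Walk.length_cons, hp]; omega⟩
  have hH'uv : H'.dist (Sum.inl u) (Sum.inl v) ≤ l := by
    obtain ⟨p, hp⟩ := hpath
    exact le_of_le_of_eq (SimpleGraph.dist_le p) hp
  -- key pointwise equality
  have key : ∀ s ∈ S ∪ {u, v}, ∀ t ∈ S ∪ {u, v},
      H'.dist (Sum.inl s) (Sum.inl t) = G.dist s t := by
    intro s hs t ht
    have hsu : G.dist s u ≤ G.dist s v + l :=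
      le_trans (hG.dist_triangle (v := v)) (by omega)
    have hsv : G.dist s v ≤ G.dist s u + l :=
      le_trans (hG.dist_triangle (v := u)) (by omega)
    apply le_antisymm
    · -- dist in H' ≤ dist in G
      set eB : V → ℕ := fun x => if x ∈ S ∪ {u, v}
        then H'.dist (Sum.inl s) (Sum.inl x)
        else min (H'.dist (Sum.inl s) (Sum.inl u) + R.dist u x)
          (H'.dist (Sum.inl s) (Sum.inl v) + R.dist v x) with heB
      have hDuv : H'.dist (Sum.inl s) (Sum.inl u) ≤ H'.dist (Sum.inl s) (Sum.inl v) + l := by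
        obtain ⟨q, hq⟩ := (hreach' s hs v hv2).exists_walk_length_eq_dist
        obtain ⟨r, hr⟩ := hpath
        calc H'.dist (Sum.inl s) (Sum.inl u) ≤ (q.append r.reverse).length :=
              SimpleGraph.dist_le _
          _ = _ := by
            rw [SimpleGraph.Walk.length_append, SimpleGraph.Walk.length_reverse, hq, hr]
      have hDvu : H'.dist (Sum.inl s) (Sum.inl v) ≤ H'.dist (Sum.inl s) (Sum.inl u) + l := by
        obtain ⟨q, hq⟩ := (hreach' s hs u hu2).exists_walk_length_eq_dist
        obtain ⟨r, hr⟩ := hpath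
        calc H'.dist (Sum.inl s) (Sum.inl v) ≤ (q.append r).length :=
              SimpleGraph.dist_le _
          _ = _ := by rw [SimpleGraph.Walk.length_append, hq, hr]
      have hlipB : ∀ a b : V, G.Adj a b → eB b ≤ eB a + 1 := by
        intro a b hab
        by_cases ha : a ∈ S ∪ {u, v} <;> by_cases hb : b ∈ S ∪ {u, v}
        · -- both inside
          rw [heB]
          simp only [if_pos ha, if_pos hb]
          by_cases hS' : a ∈ S ∨ b ∈ S
          · exact dist_concat' (hreach' s hs a ha) (hadjInl ⟨hab, hS'⟩)
          · push_neg at hS'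
            have ha' : a = u ∨ a = v := by
              rcases ha with h | h
              · exact absurd h hS'.1
              · simpa using h
            have hb' : b = u ∨ b = v := by
              rcases hb with h | h
              · exact absurd h hS'.2
              · simpa using h
            have hGadjuv : G.Adj u v := by
              rcases ha' with rfl | rfl <;> rcases hb' with rfl | rfl
              · exact absurd rfl hab.ne
              · exact hab
              · exact hab.symm
              · exact absurd rfl hab.ne
            have hRuv : R.Adj u v := ⟨hGadjuv, huS, hvS⟩
            have hl1 : l = 1 := by
              have : R.dist u v ≤ 1 :=
                SimpleGraph.dist_le (SimpleGraph.Walk.cons hRuv SimpleGraph.Walk.nil)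
              omega
            have hH'uv' : H'.Adj (Sum.inl u) (Sum.inl v) :=
              ⟨fun h => huv (Sum.inl.inj h), Or.inl (Or.inr ⟨hl1, rfl, rfl⟩)⟩
            rcases ha' with rfl | rfl <;> rcases hb' with rfl | rfl
            · exact absurd rfl hab.ne
            · exact dist_concat' (hreach' s hs a ha) hH'uv'
            · exact dist_concat' (hreach' s hs a ha) hH'uv'.symm
            · exact absurd rfl hab.ne
        · -- a inside, b outside
          have haS : a ∉ S := fun h => hb (hnbr a h b hab)
          have ha' : a = u ∨ a = v := by
            rcases ha with h | h
            · exact absurd h haS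
            · simpa using h
          have hbS : b ∉ S := fun h => hb (Or.inl h)
          rw [heB]
          simp only [if_pos ha, if_neg hb]
          rcases ha' with rfl | rfl
          · have hRab : R.Adj a b := ⟨hab, huS, hbS⟩
            have h1 : R.dist a b ≤ 1 :=
              SimpleGraph.dist_le (SimpleGraph.Walk.cons hRab SimpleGraph.Walk.nil)
            have := min_le_left (H'.dist (Sum.inl s) (Sum.inl a) + R.dist a b)
              (H'.dist (Sum.inl s) (Sum.inl v) + R.dist v b)
            omega
          · have hRab : R.Adj a b := ⟨hab, hvS, hbS⟩
            have h1 : R.dist a b ≤ 1 :=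
              SimpleGraph.dist_le (SimpleGraph.Walk.cons hRab SimpleGraph.Walk.nil)
            have := min_le_right (H'.dist (Sum.inl s) (Sum.inl u) + R.dist u b)
              (H'.dist (Sum.inl s) (Sum.inl a) + R.dist a b)
            omega
        · -- a outside, b inside
          have hbS : b ∉ S := fun h => ha (hnbr b h a hab.symm)
          have hb' : b = u ∨ b = v := by
            rcases hb with h | h
            · exact absurd h hbS
            · simpa using h
          have haS : a ∉ S := fun h => ha (Or.inl h)
          rw [heB]
          simp only [if_neg ha, if_pos hb]
          rcases hb' with rfl | rfl
          · -- b = u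
            have hRab : R.Adj a b := ⟨hab, haS, huS⟩
            have hl2 : R.dist v b ≤ R.dist v a + 1 := by
              refine dist_concat' ?_ hRab
              exact (hRreach.symm.trans hRab.symm.reachable)
            have hvb : R.dist v b = l := by rw [SimpleGraph.dist_comm]; exact hdist
            have := hDuv
            omega
          · -- b = v
            have hRab : R.Adj a b := ⟨hab, haS, hvS⟩
            have hl2 : R.dist u b ≤ R.dist u a + 1 := by
              refine dist_concat' ?_ hRab
              exact (hRreach.trans hRab.symm.reachable)
            have := hDvu
            have hub : R.dist u b = l := hdist
            omega
        · -- both outside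
          have haS : a ∉ S := fun h => ha (Or.inl h)
          have hbS : b ∉ S := fun h => hb (Or.inl h)
          have hRab : R.Adj a b := ⟨hab, haS, hbS⟩
          rw [heB]
          simp only [if_neg ha, if_neg hb]
          have h1 : R.dist u b ≤ R.dist u a + 1 := by
            by_cases hra : R.Reachable u a
            · exact dist_concat' hra hRab
            · have h0 : R.dist u a = 0 := SimpleGraph.dist_eq_zero_of_not_reachable hra
              have h0' : R.dist u b = 0 := by
                apply SimpleGraph.dist_eq_zero_of_not_reachable
                exact fun h => hra (h.trans hRab.symm.reachable)
              omega
          have h2 : R.dist v b ≤ R.dist v a + 1 := by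
            by_cases hra : R.Reachable v a
            · exact dist_concat' hra hRab
            · have h0 : R.dist v a = 0 := SimpleGraph.dist_eq_zero_of_not_reachable hra
              have h0' : R.dist v b = 0 := by
                apply SimpleGraph.dist_eq_zero_of_not_reachable
                exact fun h => hra (h.trans hRab.symm.reachable)
              omega
          omega
      obtain ⟨p, hp⟩ := (hG.preconnected s t).exists_walk_length_eq_dist
      have hfin := walk_le_of_lip hlipB p
      rw [heB] at hfin
      simp only [if_pos hs, if_pos ht, SimpleGraph.dist_self] at hfin
      omega
    · -- dist in G ≤ dist in H'
      set dA : V ⊕ Fin (l - 1) → ℕ := Sum.elim (fun x => G.dist s x)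
        (fun i : Fin (l - 1) => min (G.dist s u + ((i : ℕ) + 1))
          (G.dist s v + (l - 1 - (i : ℕ)))) with hdA
      have hboth : ∀ p q, addPathRel H u v l p q → dA q ≤ dA p + 1 ∧ dA p ≤ dA q + 1 := by
        intro p q hr
        match p, q, hr with
        | Sum.inl a, Sum.inl b, hr =>
          rcases hr with hab | ⟨h1, rfl, rfl⟩
          · have h := hab.1
            exact ⟨dist_concat' (hG.preconnected s a) h,
              dist_concat' (hG.preconnected s b) h.symm⟩
          · have hR1 : R.dist a b = 1 := by rw [hdist, h1]
            obtain ⟨p', hp'⟩ := hRreach.exists_walk_length_eq_dist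
            have hadjuv : G.Adj a b := (p'.adj_of_length_eq_one (by rw [hp', hR1])).1
            exact ⟨dist_concat' (hG.preconnected s a) hadjuv,
              dist_concat' (hG.preconnected s b) hadjuv.symm⟩
        | Sum.inl a, Sum.inr i, hr =>
          have hilt := i.isLt
          rcases hr with ⟨rfl, hi0⟩ | ⟨rfl, hil⟩
          · rw [hdA]
            simp only [Sum.elim_inl, Sum.elim_inr]
            omega
          · rw [hdA]
            simp only [Sum.elim_inl, Sum.elim_inr]
            omega
        | Sum.inr i, Sum.inl a, hr => exact hr.elim
        | Sum.inr i, Sum.inr j, hr =>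
          have hilt := i.isLt
          have hjlt := j.isLt
          have hij : (i : ℕ) + 1 = (j : ℕ) := hr
          rw [hdA]
          simp only [Sum.elim_inr]
          omega
      have hlipA : ∀ p q, H'.Adj p q → dA q ≤ dA p + 1 := by
        intro p q hpq
        rcases hpq.2 with h | h
        · exact (hboth p q h).1
        · exact (hboth q p h).2
      obtain ⟨p, hp⟩ := (hreach' s hs t ht).exists_walk_length_eq_dist
      have hfin := walk_le_of_lip hlipA p
      rw [hdA] at hfin
      simp only [Sum.elim_inl, SimpleGraph.dist_self] at hfin
      omega
  -- conclude
  show maxDistOn H' (Sum.inl '' (S ∪ {u, v})) = maxDistOn G (S ∪ {u, v})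
  unfold maxDistOn
  congr 1
  ext d
  simp only [Set.mem_setOf_eq]
  constructor
  · rintro ⟨s', ⟨s, hs, rfl⟩, t', ⟨t, ht, rfl⟩, rfl⟩
    exact ⟨s, hs, t, ht, key s hs t ht⟩
  · rintro ⟨s, hs, t, ht, rfl⟩
    exact ⟨Sum.inl s, ⟨s, hs, rfl⟩, Sum.inl t, ⟨t, ht, rfl⟩, (key s hs t ht).symm⟩

end
end EnergyDiameter
end

section
/- Let (X, V∖X) be a minimum cut of G and let u ∈ V_H. Then either (i) one part of the cut contains all vertices of (⋃_{S ∈ C(u)} S) ∪ {u}, or (ii) the value of the cut equals min_{S ∈ C(u)} c(S). -/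
open SimpleGraph Set

namespace EnergyDiameter

noncomputable section

variable {V : Type*}

variable [Fintype V]

/-- The value of a cut `X` of a graph `H`: the number of edges of `H` with exactly one
endpoint in `X` (counted as ordered pairs with first coordinate in `X`). -/
def cutValue {W : Type*} (H : SimpleGraph W) (X : Set W) : ℕ :=
  {p : W × W | H.Adj p.1 p.2 ∧ p.1 ∈ X ∧ p.2 ∉ X}.ncard

/-- `X` is a minimum cut of `H`. -/
def IsMinCut {W : Type*} (H : SimpleGraph W) (X : Set W) : Prop :=
  X.Nonempty ∧ Xᶜ.Nonempty ∧
    ∀ Y : Set W, Y.Nonempty → Yᶜ.Nonempty → cutValue H X ≤ cutValue H Y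

/-- `c(S)`: the minimum cut value of the graph `G[S]` (cuts partition the vertex set of
`G[S]` into two nonempty parts). -/
def minCutValOn (G : SimpleGraph V) (S : Set V) : ℕ :=
  sInf {c : ℕ | ∃ Y ⊆ vertsOf G S, Y.Nonempty ∧ (vertsOf G S \ Y).Nonempty ∧
    c = cutValue (edgeNbhdG G S) Y}

lemma edgeNbhd_mem_verts {G : SimpleGraph V} {S : Set V} {x y : V}
    (h : (edgeNbhdG G S).Adj x y) : x ∈ vertsOf G S ∧ y ∈ vertsOf G S := by
  obtain ⟨hadj, hS⟩ := h
  rcases hS with hx | hy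
  · exact ⟨Or.inl hx, Or.inr ⟨x, hx, hadj.symm⟩⟩
  · exact ⟨Or.inr ⟨y, hy, hadj⟩, Or.inl hy⟩

lemma cutValue_compl {W : Type*} (H : SimpleGraph W) (X : Set W) :
    cutValue H Xᶜ = cutValue H X := by
  unfold cutValue
  have hset : {p : W × W | H.Adj p.1 p.2 ∧ p.1 ∈ Xᶜ ∧ p.2 ∉ Xᶜ} =
      Prod.swap '' {p : W × W | H.Adj p.1 p.2 ∧ p.1 ∈ X ∧ p.2 ∉ X} := by
    ext ⟨a, b⟩
    constructor
    · rintro ⟨h, ha, hb⟩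
      exact ⟨(b, a), ⟨h.symm, not_not.mp (fun hb' => hb hb'), ha⟩, rfl⟩
    · rintro ⟨⟨c, d⟩, ⟨h, hc, hd⟩, hswap⟩
      obtain ⟨rfl, rfl⟩ : d = a ∧ c = b := by
        simpa [Prod.ext_iff] using hswap
      exact ⟨h.symm, hd, fun h' => h' hc⟩
  rw [hset, Set.ncard_image_of_injective _ Prod.swap_injective]

lemma cutValue_restrict {G : SimpleGraph V} {S Z : Set V} (hZ : Z ⊆ S) :
    cutValue G Z = cutValue (edgeNbhdG G S) Z := by
  unfold cutValue
  congr 1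
  ext ⟨a, b⟩
  constructor
  · rintro ⟨h, ha, hb⟩; exact ⟨⟨h, Or.inl (hZ ha)⟩, ha, hb⟩
  · rintro ⟨⟨h, _⟩, ha, hb⟩; exact ⟨h, ha, hb⟩

lemma cutValue_edge_diff {G : SimpleGraph V} (S Y : Set V) :
    cutValue (edgeNbhdG G S) (vertsOf G S \ Y) = cutValue (edgeNbhdG G S) Y := by
  rw [← cutValue_compl (edgeNbhdG G S) Y]
  unfold cutValue
  congr 1
  ext ⟨a, b⟩
  constructor
  · rintro ⟨h, ⟨haV, haY⟩, hb⟩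
    have hv := edgeNbhd_mem_verts h
    have hbY : b ∈ Y := by
      by_contra hby; exact hb ⟨hv.2, hby⟩
    exact ⟨h, haY, fun h' => h' hbY⟩
  · rintro ⟨h, ha, hb⟩
    have hv := edgeNbhd_mem_verts h
    have hbY : b ∈ Y := not_not.mp hb
    exact ⟨h, ⟨hv.1, ha⟩, fun h' => h'.2 hbY⟩

lemma c1_facts {G : SimpleGraph V} {u : V} {S : Set V} (hS : S ∈ C1 G u) (hu : u ∈ VH G) :
    S.Nonempty ∧ u ∉ S ∧ vertsOf G S = S ∪ {u} := by
  obtain ⟨⟨hSL, x₀, hx₀, hcomp⟩, hsmall, hnbr⟩ := hS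
  refine ⟨⟨x₀, hx₀⟩, fun huS => (hSL huS) hu, ?_⟩
  apply Set.Subset.antisymm
  · rintro x (hx | ⟨w, hw, hadj⟩)
    · exact Or.inl hx
    · by_cases hxH : x ∈ VH G
      · have : x ∈ HNbrs G S := ⟨hxH, w, hw, hadj⟩
        rw [hnbr] at this
        exact Or.inr this
      · have hxL : x ∈ VL G := hxH
        have hradj : (restrictG G (VL G)).Adj w x := ⟨hadj.symm, hSL hw, hxL⟩
        have hrw : (restrictG G (VL G)).Reachable x₀ w := (hcomp w).mpr hw
        have hrx : (restrictG G (VL G)).Reachable x₀ x := hrw.trans hradj.reachable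
        exact Or.inl ((hcomp x).mp hrx)
  · rintro x (hx | hx)
    · exact Or.inl hx
    · rw [Set.mem_singleton_iff] at hx
      subst hx
      have huN : x ∈ HNbrs G S := by rw [hnbr]; rfl
      obtain ⟨_, w, hw, hadj⟩ := huN
      exact Or.inr ⟨w, hw, hadj⟩

lemma cutX_le_minCut {G : SimpleGraph V} {X : Set V} (hX : IsMinCut G X)
    {u : V} (hu : u ∈ VH G) {S : Set V} (hS : S ∈ C1 G u) :
    cutValue G X ≤ minCutValOn G S := by
  obtain ⟨⟨x₀, hx₀⟩, huS, hverts⟩ := c1_facts hS hu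
  have hx₀v : x₀ ∈ vertsOf G S := Or.inl hx₀
  have huv : u ∈ vertsOf G S := by rw [hverts]; exact Or.inr rfl
  have hux₀ : u ≠ x₀ := fun h => huS (h ▸ hx₀)
  have hsetne : {c : ℕ | ∃ Y ⊆ vertsOf G S, Y.Nonempty ∧ (vertsOf G S \ Y).Nonempty ∧
      c = cutValue (edgeNbhdG G S) Y}.Nonempty := by
    refine ⟨_, {x₀}, by simpa using hx₀v, ⟨x₀, rfl⟩, ⟨u, huv, ?_⟩, rfl⟩
    simpa using hux₀
  obtain ⟨Y, hYsub, hYne, hYcne, hc⟩ := Nat.sInf_mem hsetne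
  have key : ∀ Z : Set V, Z ⊆ S → Z.Nonempty →
      cutValue G X ≤ cutValue (edgeNbhdG G S) Z := by
    intro Z hZS hZne
    have hZc : Zᶜ.Nonempty := ⟨u, fun h => huS (hZS h)⟩
    calc cutValue G X ≤ cutValue G Z := hX.2.2 Z hZne hZc
      _ = cutValue (edgeNbhdG G S) Z := cutValue_restrict hZS
  by_cases huY : u ∈ Y
  · have hZS : vertsOf G S \ Y ⊆ S := by
      intro z hz
      rcases (hverts ▸ hz.1) with h | h
      · exact h
      · exact absurd (h ▸ huY) hz.2
    have := key _ hZS hYcne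
    rw [cutValue_edge_diff] at this
    unfold minCutValOn
    omega
  · have hZS : Y ⊆ S := by
      intro z hz
      rcases (hverts ▸ hYsub hz) with h | h
      · exact h
      · exact absurd (h ▸ hz) huY
    have := key Y hZS hYne
    unfold minCutValOn
    omega

lemma minCut_le_cutT {G : SimpleGraph V} {T : Set V}
    {u : V} (hu : u ∈ VH G) {S : Set V} (hS : S ∈ C1 G u)
    (huT : u ∉ T) {w : V} (hwS : w ∈ S) (hwT : w ∈ T) :
    minCutValOn G S ≤ cutValue G T := by
  obtain ⟨hne, huS, hverts⟩ := c1_facts hS hu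
  have huv : u ∈ vertsOf G S := by rw [hverts]; exact Or.inr rfl
  set Y : Set V := (S ∪ {u}) ∩ T with hYdef
  have hYsub : Y ⊆ vertsOf G S := by rw [hverts]; exact Set.inter_subset_left
  have hwY : w ∈ Y := ⟨Or.inl hwS, hwT⟩
  have huNY : u ∉ Y := fun h => huT h.2
  have step1 : minCutValOn G S ≤ cutValue (edgeNbhdG G S) Y :=
    Nat.sInf_le ⟨Y, hYsub, ⟨w, hwY⟩, ⟨u, huv, huNY⟩, rfl⟩
  have step2 : cutValue (edgeNbhdG G S) Y ≤ cutValue G T := by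
    apply Set.ncard_le_ncard _ (Set.toFinite _)
    rintro ⟨a, b⟩ ⟨h, ha, hb⟩
    have hbV : b ∈ S ∪ {u} := by rw [← hverts]; exact (edgeNbhd_mem_verts h).2
    exact ⟨h.1, ha.2, fun hbT => hb ⟨hbV, hbT⟩⟩
  exact step1.trans step2

/-- Let `(X, V∖X)` be a minimum cut of `G` and `u ∈ V_H`.  Then either one part of the
cut contains all vertices of `(⋃_{S ∈ C(u)} S) ∪ {u}`, or the value of the cut equals
`min_{S ∈ C(u)} c(S)`. -/
theorem minCut_type1 (G : SimpleGraph V) (hG : G.Connected)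
    (hn : 1 ≤ Fintype.card V) (X : Set V) (hX : IsMinCut G X)
    (u : V) (hu : u ∈ VH G) :
    ((⋃ S ∈ C1 G u, S) ∪ {u} ⊆ X ∨ (⋃ S ∈ C1 G u, S) ∪ {u} ⊆ Xᶜ) ∨
      cutValue G X = sInf (minCutValOn G '' C1 G u) := by
  by_cases hC : (C1 G u).Nonempty
  · by_cases hsplit : (⋃ S ∈ C1 G u, S) ∪ {u} ⊆ X ∨ (⋃ S ∈ C1 G u, S) ∪ {u} ⊆ Xᶜ
    · exact Or.inl hsplit
    · right
      push_neg at hsplit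
      obtain ⟨hnX, hnXc⟩ := hsplit
      rw [Set.not_subset] at hnX hnXc
      obtain ⟨w₁, hw₁mem, hw₁⟩ := hnX
      obtain ⟨w₂, hw₂mem, hw₂⟩ := hnXc
      rw [Set.notMem_compl_iff] at hw₂
      -- choose T so that u ∉ T, cutValue G T = cutValue G X, and some w in ⋃ lies in T
      obtain ⟨T, hTval, huT, w, hwU, hwT⟩ :
          ∃ T : Set V, cutValue G T = cutValue G X ∧ u ∉ T ∧
            ∃ w, w ∈ (⋃ S ∈ C1 G u, S) ∧ w ∈ T := by
        by_cases huX : u ∈ X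
        · refine ⟨Xᶜ, cutValue_compl G X, by simpa using huX, w₁, ?_, hw₁⟩
          rcases hw₁mem with h | h
          · exact h
          · rw [Set.mem_singleton_iff] at h
            exact absurd (h.symm ▸ huX) hw₁
        · refine ⟨X, rfl, huX, w₂, ?_, hw₂⟩
          rcases hw₂mem with h | h
          · exact h
          · rw [Set.mem_singleton_iff] at h
            exact absurd (h ▸ hw₂) huX
      obtain ⟨S, hSmem, hwS⟩ := Set.mem_iUnion₂.mp hwU
      have hupper : cutValue G X ≤ sInf (minCutValOn G '' C1 G u) := by
        have hne : (minCutValOn G '' C1 G u).Nonempty := hC.image _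
        obtain ⟨S₀, hS₀, heq⟩ := Nat.sInf_mem hne
        rw [← heq]
        exact cutX_le_minCut hX hu hS₀
      have hlower : sInf (minCutValOn G '' C1 G u) ≤ cutValue G X := by
        have h1 : sInf (minCutValOn G '' C1 G u) ≤ minCutValOn G S :=
          Nat.sInf_le ⟨S, hSmem, rfl⟩
        have h2 : minCutValOn G S ≤ cutValue G T :=
          minCut_le_cutT hu hSmem huT hwS hwT
        omega
      omega
  · left
    have hCe : C1 G u = ∅ := Set.not_nonempty_iff_eq_empty.mp hC
    have hU : (⋃ S ∈ C1 G u, S) ∪ {u} = {u} := by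
      rw [hCe]; simp
    rw [hU]
    by_cases huX : u ∈ X
    · exact Or.inl (by simpa using huX)
    · exact Or.inr (by simpa using huX)

end
end EnergyDiameter
end
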